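/- arXiv:2211.08741 — 5 statements merged into one kernel-verified Lean document; each statement's English description precedes it below -/
import Mathlib

section
/- For any real γ ≠ 0, -1 and strictly positive vectors q₀, q₁ ∈ (0,∞)^𝒜 on a finite set 𝒜, the pointwise γ-power divergence d_γ(q₀,q₁) = -(1/γ) ∑_a q₀(a) q₁(a)^γ / (∑_a q₁(a)^{1+γ})^{γ/(1+γ)} + (1/γ)(∑_a q₀(a)^{1+γ})^{1/(1+γ)} is nonnegative, with equality if and only if q₁ is a positive scalar multiple of q₀. This holds also for negative γ. -/
open Finset

open Real in

/-- Strict tangent-line inequality for x^p, convex cases (p<0 or 1<p). -/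
lemma tangent_lt {p x y : ℝ} (hx : 0 < x) (hy : 0 < y) (hxy : y ≠ x) (hp : p < 0 ∨ 1 < p) :
    x ^ p + p * x ^ (p - 1) * (y - x) < y ^ p := by
  have ht : 0 < y / x := div_pos hy hx
  have ht1 : y / x ≠ 1 := by
    exact fun h => hxy (by field_simp at h; exact h)
  have key : 1 + p * (y / x - 1) < (y / x) ^ p := by
    rcases hp with hp | hp
    · have hlog : Real.log (y / x) < y / x - 1 := Real.log_lt_sub_one_of_pos ht ht1
      have hlogne : Real.log (y / x) ≠ 0 := Real.log_ne_zero_of_pos_of_ne_one ht ht1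
      have h1 : 1 + p * (y / x - 1) < 1 + p * Real.log (y / x) := by nlinarith
      have h2 : p * Real.log (y / x) + 1 < Real.exp (p * Real.log (y / x)) :=
        Real.add_one_lt_exp (by exact mul_ne_zero (by linarith) hlogne)
      have h3 : Real.exp (p * Real.log (y / x)) = (y / x) ^ p := by
        rw [Real.rpow_def_of_pos ht, mul_comm]
      linarith [h3 ▸ h2]
    · have := one_add_mul_self_lt_rpow_one_add (s := y / x - 1) (by linarith) (sub_ne_zero.mpr ht1) hp
      simpa using this
  have hxp : 0 < x ^ p := Real.rpow_pos_of_pos hx p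
  have e2 : x ^ (p - 1) = x ^ p / x := by rw [Real.rpow_sub hx, Real.rpow_one]
  have h3 : x ^ p * (1 + p * (y / x - 1)) = x ^ p + p * x ^ (p - 1) * (y - x) := by
    rw [e2]; field_simp
  have h4 : x ^ p * ((y / x) ^ p) = y ^ p := by
    rw [Real.div_rpow hy.le hx.le]; field_simp
  calc x ^ p + p * x ^ (p - 1) * (y - x) = x ^ p * (1 + p * (y / x - 1)) := h3.symm
    _ < x ^ p * ((y / x) ^ p) := by exact (mul_lt_mul_iff_right₀ hxp).mpr key
    _ = y ^ p := h4

/-- Strict tangent-line inequality for x^p, concave case (0<p<1). -/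
lemma tangent_gt {p x y : ℝ} (hx : 0 < x) (hy : 0 < y) (hxy : y ≠ x) (hp0 : 0 < p) (hp1 : p < 1) :
    y ^ p < x ^ p + p * x ^ (p - 1) * (y - x) := by
  have ht : 0 < y / x := div_pos hy hx
  have ht1 : y / x ≠ 1 := by exact fun h => hxy (by field_simp at h; exact h)
  have key : (y / x) ^ p < 1 + p * (y / x - 1) := by
    have := rpow_one_add_lt_one_add_mul_self (s := y / x - 1) (by linarith) (sub_ne_zero.mpr ht1) hp0 hp1
    simpa using this
  have hxp : 0 < x ^ p := Real.rpow_pos_of_pos hx p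
  have e2 : x ^ (p - 1) = x ^ p / x := by rw [Real.rpow_sub hx, Real.rpow_one]
  have h3 : x ^ p * (1 + p * (y / x - 1)) = x ^ p + p * x ^ (p - 1) * (y - x) := by
    rw [e2]; field_simp
  have h4 : x ^ p * ((y / x) ^ p) = y ^ p := by
    rw [Real.div_rpow hy.le hx.le]; field_simp
  calc y ^ p = x ^ p * ((y / x) ^ p) := h4.symm
    _ < x ^ p * (1 + p * (y / x - 1)) := by exact (mul_lt_mul_iff_right₀ hxp).mpr key
    _ = x ^ p + p * x ^ (p - 1) * (y - x) := h3

open Real in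
/-- Strict tangent-line inequality for V(x) = -(1/γ) x^(γ/(1+γ)). -/
lemma V_tangent {γ : ℝ} (h0 : γ ≠ 0) (h1 : (1:ℝ) + γ ≠ 0) {x y : ℝ}
    (hx : 0 < x) (hy : 0 < y) (hxy : y ≠ x) :
    -(1/γ) * x ^ (γ/(1+γ)) + -(1/(1+γ)) * x ^ (γ/(1+γ) - 1) * (y - x)
      < -(1/γ) * y ^ (γ/(1+γ)) := by
  set p := γ/(1+γ) with hp_def
  have hpe : -(1/(1+γ)) = -(1/γ) * p := by rw [hp_def]; field_simp
  have e : -(1/γ) * x ^ p + -(1/(1+γ)) * x ^ (p - 1) * (y - x)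
      = -(1/γ) * (x ^ p + p * x ^ (p - 1) * (y - x)) := by rw [hpe]; ring
  rw [e]
  rcases lt_trichotomy γ 0 with hγ | hγ | hγ
  · have hc : 0 < -(1/γ) := by rw [neg_pos]; exact div_neg_of_pos_of_neg one_pos hγ
    rcases lt_trichotomy (1+γ) 0 with hg | hg | hg
    · -- γ < -1 : p > 1
      have hp1 : 1 < p := by
        rw [hp_def, lt_div_iff_of_neg hg]; linarith
      exact (mul_lt_mul_iff_right₀ hc).mpr (tangent_lt hx hy hxy (Or.inr hp1))
    · exact absurd hg h1
    · -- -1 < γ < 0 : p < 0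
      have hp0 : p < 0 := div_neg_of_neg_of_pos hγ hg
      exact (mul_lt_mul_iff_right₀ hc).mpr (tangent_lt hx hy hxy (Or.inl hp0))
  · exact absurd hγ h0
  · -- γ > 0 : 0 < p < 1
    have hg : 0 < 1 + γ := by linarith
    have hp0 : 0 < p := div_pos hγ hg
    have hp1 : p < 1 := by rw [hp_def, div_lt_one hg]; linarith
    have hc : -(1/γ) < 0 := neg_lt_zero.mpr (by positivity)
    have := tangent_gt hx hy hxy hp0 hp1
    nlinarith [this, hc]

/-- The pointwise γ-power divergence. -/
noncomputable def dGamma {𝒜 : Type*} [Fintype 𝒜] (γ : ℝ) (q₀ q₁ : 𝒜 → ℝ) : ℝ :=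
  -(1 / γ) * ((∑ a, q₀ a * q₁ a ^ γ) / (∑ a, q₁ a ^ (1 + γ)) ^ (γ / (1 + γ)))
    + (1 / γ) * (∑ a, q₀ a ^ (1 + γ)) ^ (1 / (1 + γ))

/-- for any γ ≠ 0, −1 (including negative γ), the pointwise
    γ-power divergence is nonnegative, vanishing iff q₁ is a positive scalar
    multiple of q₀. -/
theorem dGamma_nonneg_eq_iff
    {𝒜 : Type*} [Fintype 𝒜] [Nonempty 𝒜] (γ : ℝ) (h0 : γ ≠ 0) (h1 : γ ≠ -1)
    (q₀ q₁ : 𝒜 → ℝ) (hq₀ : ∀ a, 0 < q₀ a) (hq₁ : ∀ a, 0 < q₁ a) :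
    0 ≤ dGamma γ q₀ q₁
    ∧ (dGamma γ q₀ q₁ = 0 ↔ ∃ c : ℝ, 0 < c ∧ ∀ a, q₁ a = c * q₀ a) := by
  have h1' : (1:ℝ) + γ ≠ 0 := fun h => h1 (by linarith)
  obtain ⟨T₀, hT₀def⟩ : ∃ t : ℝ, t = ∑ a, q₀ a ^ (1+γ) := ⟨_, rfl⟩
  obtain ⟨T₁, hT₁def⟩ : ∃ t : ℝ, t = ∑ a, q₁ a ^ (1+γ) := ⟨_, rfl⟩
  have hT₀ : 0 < T₀ := hT₀def ▸
    Finset.sum_pos (fun a _ => Real.rpow_pos_of_pos (hq₀ a) _) Finset.univ_nonempty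
  have hT₁ : 0 < T₁ := hT₁def ▸
    Finset.sum_pos (fun a _ => Real.rpow_pos_of_pos (hq₁ a) _) Finset.univ_nonempty
  obtain ⟨R₀, hR₀⟩ : ∃ R : 𝒜 → ℝ, ∀ a, R a = q₀ a ^ (1+γ) / T₀ := ⟨_, fun _ => rfl⟩
  obtain ⟨R₁, hR₁⟩ : ∃ R : 𝒜 → ℝ, ∀ a, R a = q₁ a ^ (1+γ) / T₁ := ⟨_, fun _ => rfl⟩
  have hR₀pos : ∀ a, 0 < R₀ a := fun a =>
    (hR₀ a) ▸ div_pos (Real.rpow_pos_of_pos (hq₀ a) _) hT₀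
  have hR₁pos : ∀ a, 0 < R₁ a := fun a =>
    (hR₁ a) ▸ div_pos (Real.rpow_pos_of_pos (hq₁ a) _) hT₁
  have hsum₀ : ∑ a, R₀ a = 1 := by
    rw [Finset.sum_congr rfl (fun a _ => hR₀ a), ← Finset.sum_div, ← hT₀def,
      div_self hT₀.ne']
  have hsum₁ : ∑ a, R₁ a = 1 := by
    rw [Finset.sum_congr rfl (fun a _ => hR₁ a), ← Finset.sum_div, ← hT₁def,
      div_self hT₁.ne']
  obtain ⟨p, hp_def⟩ : ∃ p : ℝ, p = γ/(1+γ) := ⟨_, rfl⟩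
  have hmul : (1+γ) * p = γ := by rw [hp_def]; field_simp
  have hone : 1 - p = 1/(1+γ) := by rw [hp_def]; field_simp; ring
  have hCp : (1+γ) * (p - 1) = -1 := by rw [hp_def]; field_simp; ring
  -- Key identity: the weighted derivative is constant
  have hC : ∀ a, q₀ a * (R₀ a) ^ (p-1) = T₀ ^ (1/(1+γ)) := by
    intro a
    rw [hR₀ a, Real.div_rpow (Real.rpow_nonneg (hq₀ a).le _) hT₀.le,
      ← Real.rpow_mul (hq₀ a).le, hCp, Real.rpow_neg_one]
    have e3 : T₀ ^ (p-1) = (T₀ ^ (1/(1+γ)))⁻¹ := by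
      rw [← Real.rpow_neg_one (T₀ ^ (1/(1+γ))), ← Real.rpow_mul hT₀.le]
      congr 1
      rw [← hone]; ring
    rw [e3]
    field_simp
    exact div_self (hq₀ a).ne'
  obtain ⟨F, hF⟩ : ∃ F : 𝒜 → ℝ, ∀ a, F a = q₀ a * (-(1/γ) * (R₁ a) ^ p) := ⟨_, fun _ => rfl⟩
  obtain ⟨G, hG⟩ : ∃ G : 𝒜 → ℝ, ∀ a, G a = q₀ a * (-(1/γ) * (R₀ a) ^ p)
      + -(1/(1+γ)) * T₀ ^ (1/(1+γ)) * (R₁ a - R₀ a) := ⟨_, fun _ => rfl⟩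
  have key_lt : ∀ a, R₁ a ≠ R₀ a → G a < F a := by
    intro a hne
    have h := V_tangent h0 h1' (hR₀pos a) (hR₁pos a) hne
    rw [← hp_def] at h
    have h' := mul_lt_mul_of_pos_left h (hq₀ a)
    have expand : q₀ a * (-(1/γ) * (R₀ a) ^ p + -(1/(1+γ)) * (R₀ a) ^ (p-1) * (R₁ a - R₀ a))
        = G a := by
      rw [hG a,
        show q₀ a * (-(1/γ) * (R₀ a) ^ p + -(1/(1+γ)) * (R₀ a) ^ (p-1) * (R₁ a - R₀ a))
          = q₀ a * (-(1/γ) * (R₀ a) ^ p)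
            + -(1/(1+γ)) * (q₀ a * (R₀ a) ^ (p-1)) * (R₁ a - R₀ a) from by ring, hC a]
    rw [expand] at h'
    rw [hF a]
    exact h'
  have key_eq : ∀ a, R₁ a = R₀ a → G a = F a := by
    intro a he
    rw [hG a, hF a, he]
    ring
  have key_le : ∀ a, G a ≤ F a := by
    intro a
    rcases eq_or_ne (R₁ a) (R₀ a) with he | hne
    · exact (key_eq a he).le
    · exact (key_lt a hne).le
  -- sums
  have hFa : ∀ a, F a = -(1/γ) * (q₀ a * q₁ a ^ γ) / T₁ ^ p := by
    intro a
    rw [hF a, hR₁ a, Real.div_rpow (Real.rpow_nonneg (hq₁ a).le _) hT₁.le,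
      ← Real.rpow_mul (hq₁ a).le, hmul]
    ring
  have hsumF : ∑ a, F a = -(1/γ) * ((∑ a, q₀ a * q₁ a ^ γ) / T₁ ^ p) := by
    rw [Finset.sum_congr rfl (fun a _ => hFa a), ← Finset.sum_div, ← Finset.mul_sum,
      mul_div_assoc]
  have hGa : ∀ a, G a = -(1/γ) * (q₀ a ^ (1+γ)) / T₀ ^ p
      + -(1/(1+γ)) * T₀ ^ (1/(1+γ)) * (R₁ a - R₀ a) := by
    intro a
    rw [hG a, hR₀ a, Real.div_rpow (Real.rpow_nonneg (hq₀ a).le _) hT₀.le,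
      ← Real.rpow_mul (hq₀ a).le, hmul]
    have hq : q₀ a * q₀ a ^ γ = q₀ a ^ (1+γ) := by
      rw [Real.rpow_add (hq₀ a), Real.rpow_one]
    rw [show q₀ a * (-(1/γ) * (q₀ a ^ γ / T₀ ^ p)) = -(1/γ) * (q₀ a * q₀ a ^ γ) / T₀ ^ p
      from by ring, hq]
  have hsumG : ∑ a, G a = -(1/γ) * T₀ ^ (1/(1+γ)) := by
    rw [Finset.sum_congr rfl (fun a _ => hGa a), Finset.sum_add_distrib,
      ← Finset.sum_div, ← Finset.mul_sum, ← hT₀def, ← Finset.mul_sum,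
      Finset.sum_sub_distrib, hsum₀, hsum₁]
    have : T₀ / T₀ ^ p = T₀ ^ (1/(1+γ)) := by
      rw [← hone, Real.rpow_sub hT₀, Real.rpow_one]
    rw [mul_div_assoc, this]
    ring
  have hd : dGamma γ q₀ q₁ = (∑ a, F a) - (∑ a, G a) := by
    rw [dGamma, hsumF, hsumG, ← hT₀def, ← hT₁def, ← hp_def]
    ring
  have hle : ∑ a, G a ≤ ∑ a, F a := Finset.sum_le_sum (fun a _ => key_le a)
  have hnn : 0 ≤ dGamma γ q₀ q₁ := by rw [hd]; linarith
  refine ⟨hnn, ?_, ?_⟩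
  · intro hzero
    have hall : ∀ a, R₁ a = R₀ a := by
      by_contra hcon
      push_neg at hcon
      obtain ⟨a, ha⟩ := hcon
      have hlt : ∑ a, G a < ∑ a, F a :=
        Finset.sum_lt_sum (fun i _ => key_le i) ⟨a, Finset.mem_univ a, key_lt a ha⟩
      rw [hd] at hzero
      linarith
    have hpow : ∀ x : ℝ, 0 < x → (x ^ (1+γ)) ^ (1/(1+γ)) = x := by
      intro x hx
      rw [← Real.rpow_mul hx.le, mul_one_div_cancel h1', Real.rpow_one]
    refine ⟨(T₁/T₀) ^ (1/(1+γ)), Real.rpow_pos_of_pos (div_pos hT₁ hT₀) _, fun a => ?_⟩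
    have hq : q₁ a ^ (1+γ) = (T₁/T₀) * q₀ a ^ (1+γ) := by
      have h := hall a
      rw [hR₁ a, hR₀ a, div_eq_div_iff hT₁.ne' hT₀.ne'] at h
      field_simp
      linarith
    calc q₁ a = (q₁ a ^ (1+γ)) ^ (1/(1+γ)) := (hpow _ (hq₁ a)).symm
      _ = ((T₁/T₀) * q₀ a ^ (1+γ)) ^ (1/(1+γ)) := by rw [hq]
      _ = (T₁/T₀) ^ (1/(1+γ)) * (q₀ a ^ (1+γ)) ^ (1/(1+γ)) :=
          Real.mul_rpow (div_pos hT₁ hT₀).le (Real.rpow_nonneg (hq₀ a).le _)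
      _ = (T₁/T₀) ^ (1/(1+γ)) * q₀ a := by rw [hpow _ (hq₀ a)]
  · rintro ⟨c, hc, hcq⟩
    have hT : T₁ = c ^ (1+γ) * T₀ := by
      rw [hT₁def, hT₀def, Finset.mul_sum]
      exact Finset.sum_congr rfl fun a _ => by
        rw [hcq a, Real.mul_rpow hc.le (hq₀ a).le]
    have hall : ∀ a, R₁ a = R₀ a := by
      intro a
      rw [hR₁ a, hR₀ a, hcq a, Real.mul_rpow hc.le (hq₀ a).le, hT,
        mul_div_mul_left _ _ (Real.rpow_pos_of_pos hc _).ne']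
    have heq : ∑ a, G a = ∑ a, F a := Finset.sum_congr rfl fun a _ => key_eq a (hall a)
    rw [hd, heq, sub_self]
end

section
/- As γ → 0, the pointwise γ-power divergence d_γ(q₀,q₁) converges to the normalized Kullback–Leibler expression ∑_a q₀(a) [ log( q₀(a)/∑_{a'} q₀(a') ) − log( q₁(a)/∑_{a'} q₁(a') ) ]. -/
open Finset Filter Topology

/-- as γ → 0 the γ-power divergence converges to the normalized
    Kullback–Leibler divergence. -/
theorem dGamma_tendsto_normalized_KL
    {𝒜 : Type*} [Fintype 𝒜] [Nonempty 𝒜]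
    (q₀ q₁ : 𝒜 → ℝ) (hq₀ : ∀ a, 0 < q₀ a) (hq₁ : ∀ a, 0 < q₁ a) :
    Tendsto (fun γ : ℝ => dGamma γ q₀ q₁) (𝓝[≠] (0:ℝ))
      (𝓝 (∑ a, q₀ a *
        (Real.log (q₀ a / ∑ a', q₀ a') - Real.log (q₁ a / ∑ a', q₁ a')))) := by
  have hS₀ : (0:ℝ) < ∑ a, q₀ a := Finset.sum_pos (fun a _ => hq₀ a) univ_nonempty
  have hS₁ : (0:ℝ) < ∑ a, q₁ a := Finset.sum_pos (fun a _ => hq₁ a) univ_nonempty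
  set S₀ : ℝ := ∑ a, q₀ a with hS₀def
  set S₁ : ℝ := ∑ a, q₁ a with hS₁def
  set T₀ : ℝ := ∑ a, q₀ a * Real.log (q₀ a) with hT₀def
  set T₁ : ℝ := ∑ a, q₀ a * Real.log (q₁ a) with hT₁def
  set U₁ : ℝ := ∑ a, q₁ a * Real.log (q₁ a) with hU₁def
  set A : ℝ → ℝ := fun γ => ∑ a, q₀ a ^ (1+γ) with hAdef
  set B : ℝ → ℝ := fun γ => ∑ a, q₁ a ^ (1+γ) with hBdef
  set C : ℝ → ℝ := fun γ => ∑ a, q₀ a * q₁ a ^ γ with hCdef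
  have hApos : ∀ γ, 0 < A γ := fun γ =>
    Finset.sum_pos (fun a _ => Real.rpow_pos_of_pos (hq₀ a) _) univ_nonempty
  have hBpos : ∀ γ, 0 < B γ := fun γ =>
    Finset.sum_pos (fun a _ => Real.rpow_pos_of_pos (hq₁ a) _) univ_nonempty
  set F : ℝ → ℝ := fun γ =>
    Real.exp (Real.log (A γ) * (1/(1+γ))) - C γ / Real.exp (Real.log (B γ) * (γ/(1+γ)))
    with hFdef
  -- derivatives of the sums
  have hA : HasDerivAt A T₀ 0 := by
    rw [hAdef, hT₀def]
    apply HasDerivAt.fun_sum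
    intro a _
    have h := ((Real.hasStrictDerivAt_const_rpow (hq₀ a) (1+0)).hasDerivAt).comp 0
      ((hasDerivAt_id (0:ℝ)).const_add 1)
    simpa [Function.comp_def] using h
  have hB : HasDerivAt B U₁ 0 := by
    rw [hBdef, hU₁def]
    apply HasDerivAt.fun_sum
    intro a _
    have h := ((Real.hasStrictDerivAt_const_rpow (hq₁ a) (1+0)).hasDerivAt).comp 0
      ((hasDerivAt_id (0:ℝ)).const_add 1)
    simpa [Function.comp_def] using h
  have hC : HasDerivAt C T₁ 0 := by
    rw [hCdef, hT₁def]
    apply HasDerivAt.fun_sum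
    intro a _
    have h := ((Real.hasStrictDerivAt_const_rpow (hq₁ a) 0).hasDerivAt).const_mul (q₀ a)
    simpa [mul_assoc] using h
  -- simple rational functions
  have h11 : HasDerivAt (fun γ:ℝ => 1/(1+γ)) (-1) 0 := by
    have h := ((hasDerivAt_id (0:ℝ)).const_add 1).fun_inv (by norm_num)
    simpa [one_div] using h
  have hgg : HasDerivAt (fun γ:ℝ => γ/(1+γ)) 1 0 := by
    have h := (hasDerivAt_id (0:ℝ)).fun_div ((hasDerivAt_id (0:ℝ)).const_add 1) (by norm_num)
    simpa using h
  -- first term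
  have hu : HasDerivAt (fun γ => Real.log (A γ) * (1/(1+γ)))
      (T₀/S₀ - Real.log S₀) 0 := by
    have h := (hA.log (hApos 0).ne').fun_mul h11
    have hA0 : A 0 = S₀ := by simp [hAdef, hS₀def, Real.rpow_one]
    rw [hA0] at h
    refine h.congr_deriv ?_
    ring
  have hF₁ : HasDerivAt (fun γ => Real.exp (Real.log (A γ) * (1/(1+γ))))
      (T₀ - S₀ * Real.log S₀) 0 := by
    have h := hu.exp
    have hA0 : A 0 = S₀ := by simp [hAdef, hS₀def, Real.rpow_one]
    rw [hA0] at h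
    simp only [add_zero, div_one, mul_one] at h
    rw [Real.exp_log hS₀] at h
    convert h using 1
    field_simp
  -- second term
  have hw : HasDerivAt (fun γ => Real.exp (Real.log (B γ) * (γ/(1+γ))))
      (Real.log S₁) 0 := by
    have h := ((hB.log (hBpos 0).ne').mul hgg).exp
    have hB0 : B 0 = S₁ := by simp [hBdef, hS₁def, Real.rpow_one]
    rw [hB0] at h
    simpa using h
  have hF₂ : HasDerivAt (fun γ => C γ / Real.exp (Real.log (B γ) * (γ/(1+γ))))
      (T₁ - S₀ * Real.log S₁) 0 := by
    have h := hC.fun_div hw (Real.exp_ne_zero _)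
    have hB0 : B 0 = S₁ := by simp [hBdef, hS₁def, Real.rpow_one]
    have hC0 : C 0 = S₀ := by simp [hCdef, hS₀def]
    rw [hB0, hC0] at h
    simpa using h
  have hF : HasDerivAt F (T₀ - S₀ * Real.log S₀ - (T₁ - S₀ * Real.log S₁)) 0 := hF₁.sub hF₂
  -- value of the limit
  have hL : T₀ - S₀ * Real.log S₀ - (T₁ - S₀ * Real.log S₁)
      = ∑ a, q₀ a * (Real.log (q₀ a / S₀) - Real.log (q₁ a / S₁)) := by
    have : ∀ a, q₀ a * (Real.log (q₀ a / S₀) - Real.log (q₁ a / S₁))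
        = q₀ a * Real.log (q₀ a) - q₀ a * Real.log (q₁ a)
          - q₀ a * Real.log S₀ + q₀ a * Real.log S₁ := by
      intro a
      rw [Real.log_div (hq₀ a).ne' hS₀.ne', Real.log_div (hq₁ a).ne' hS₁.ne']
      ring
    simp only [this]
    rw [show (fun a => q₀ a * Real.log (q₀ a) - q₀ a * Real.log (q₁ a)
          - q₀ a * Real.log S₀ + q₀ a * Real.log S₁) = fun a => (q₀ a * Real.log (q₀ a)
          - q₀ a * Real.log (q₁ a) - q₀ a * Real.log S₀ + q₀ a * Real.log S₁) from rfl]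
    rw [Finset.sum_add_distrib, Finset.sum_sub_distrib, Finset.sum_sub_distrib,
      ← Finset.sum_mul, ← Finset.sum_mul]
    rw [hT₀def, hT₁def, hS₀def]
    ring
  -- conclude via slope
  have key : Tendsto (slope F 0) (𝓝[≠] (0:ℝ))
      (𝓝 (∑ a, q₀ a * (Real.log (q₀ a / S₀) - Real.log (q₁ a / S₁)))) := by
    rw [← hL]
    exact hasDerivAt_iff_tendsto_slope.mp hF
  have hF0 : F 0 = 0 := by
    have hA0 : A 0 = S₀ := by simp [hAdef, hS₀def, Real.rpow_one]
    have hC0 : C 0 = S₀ := by simp [hCdef, hS₀def]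
    simp [hFdef, hA0, hC0, Real.exp_log hS₀]
  refine key.congr' ?_
  filter_upwards [self_mem_nhdsWithin] with γ (hγ : γ ≠ 0)
  rw [slope_def_field, hF0]
  have hrw₁ : A γ ^ (1/(1+γ)) = Real.exp (Real.log (A γ) * (1/(1+γ))) :=
    Real.rpow_def_of_pos (hApos γ) _
  have hrw₂ : B γ ^ (γ/(1+γ)) = Real.exp (Real.log (B γ) * (γ/(1+γ))) :=
    Real.rpow_def_of_pos (hBpos γ) _
  show (F γ - 0) / (γ - 0) = dGamma γ q₀ q₁
  rw [hFdef]
  simp only [sub_zero]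
  unfold dGamma
  have e₁ : (∑ a, q₀ a ^ (1+γ)) = A γ := rfl
  have e₂ : (∑ a, q₁ a ^ (1+γ)) = B γ := rfl
  have e₃ : (∑ a, q₀ a * q₁ a ^ γ) = C γ := rfl
  rw [e₁, e₂, e₃, hrw₁, hrw₂]
  field_simp
  ring
end

section
/- Suppose q₁ : 𝒜 → (0,∞) has a unique maximizer a₁* ∈ 𝒜. Then lim_{γ→∞} γ · [ -(1/γ) ∑_a q₀(a) q₁(a)^γ / (∑_a q₁(a)^{1+γ})^{γ/(1+γ)} ] = − q₀(a₁*). Consequently, if q₀ also has a unique maximizer a₀*, then lim_{γ→∞} γ · d_γ(q₀, q₁) = q₀(a₀*) − q₀(a₁*), the pointwise regret of the policy induced by q₁ evaluated under q₀. -/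
open Finset Filter Topology

/-- Sum of weighted powers tends to the weight at the unique maximizer. -/
lemma sum_mul_rpow_tendsto {𝒜 : Type*} [Fintype 𝒜] [DecidableEq 𝒜] (c r : 𝒜 → ℝ)
    (hr : ∀ a, 0 < r a) (a₁ : 𝒜) (h1 : r a₁ = 1) (hlt : ∀ b, b ≠ a₁ → r b < 1) :
    Tendsto (fun γ : ℝ => ∑ a, c a * r a ^ γ) atTop (𝓝 (c a₁)) := by
  have h : Tendsto (fun γ : ℝ => ∑ a, c a * r a ^ γ) atTop
      (𝓝 (∑ a, if a = a₁ then c a₁ else 0)) := by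
    apply tendsto_finset_sum
    intro a _
    by_cases ha : a = a₁
    · subst ha
      simpa [h1, Real.one_rpow] using (tendsto_const_nhds : Tendsto (fun _ : ℝ => c a₁) atTop (𝓝 (c a₁)))
    · simp only [ha, if_false]
      have := (tendsto_rpow_atTop_of_base_lt_one (r a)
        (by linarith [hr a]) (hlt a ha)).const_mul (c a)
      simpa using this
  simpa using h

section Main

variable {𝒜 : Type*} [Fintype 𝒜] [Nonempty 𝒜]

/-- Denominator-normalized power-sum exponentiated tends to 1. -/
lemma lemC (q₁ : 𝒜 → ℝ) (hq₁ : ∀ a, 0 < q₁ a) (a₁ : 𝒜)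
    (hmax₁ : ∀ b, b ≠ a₁ → q₁ b < q₁ a₁) :
    Tendsto (fun γ : ℝ =>
      (∑ a, (q₁ a / q₁ a₁) ^ (1 + γ)) ^ (γ / (1 + γ))) atTop (𝓝 1) := by
  classical
  set r : 𝒜 → ℝ := fun a => q₁ a / q₁ a₁ with hr_def
  have hM := hq₁ a₁
  have hr : ∀ a, 0 < r a := fun a => div_pos (hq₁ a) hM
  have h1 : r a₁ = 1 := div_self hM.ne'
  have hlt : ∀ b, b ≠ a₁ → r b < 1 := fun b hb =>
    (div_lt_one hM).2 (hmax₁ b hb)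
  -- T' γ = ∑ r a ^ (1+γ) → 1
  have hT : Tendsto (fun γ : ℝ => ∑ a, r a ^ (1 + γ)) atTop (𝓝 1) := by
    have base : Tendsto (fun x : ℝ => ∑ a, (1 : ℝ) * r a ^ x) atTop (𝓝 1) := by
      simpa using sum_mul_rpow_tendsto (fun _ => (1:ℝ)) r hr a₁ h1 hlt
    have comp := base.comp (tendsto_atTop_add_const_left atTop 1 tendsto_id)
    simpa [Function.comp_def] using comp
  -- squeeze: 1 ≤ T'^(γ/(1+γ)) ≤ T' eventually
  have hev : ∀ᶠ γ : ℝ in atTop, (0:ℝ) < γ := eventually_gt_atTop 0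
  have hTge1 : ∀ γ : ℝ, 0 < γ → 1 ≤ ∑ a, r a ^ (1 + γ) := by
    intro γ hγ
    calc (1:ℝ) = r a₁ ^ (1 + γ) := by rw [h1, Real.one_rpow]
    _ ≤ ∑ a, r a ^ (1 + γ) := by
      apply Finset.single_le_sum (f := fun a => r a ^ (1 + γ))
      · intro a _; exact (Real.rpow_pos_of_pos (hr a) _).le
      · exact Finset.mem_univ a₁
  refine tendsto_of_tendsto_of_tendsto_of_le_of_le' tendsto_const_nhds hT ?_ ?_
  · filter_upwards [hev] with γ hγ
    calc (1:ℝ) = 1 ^ (γ / (1 + γ)) := (Real.one_rpow _).symm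
    _ ≤ (∑ a, r a ^ (1 + γ)) ^ (γ / (1 + γ)) :=
      Real.rpow_le_rpow (by norm_num) (hTge1 γ hγ)
        (div_nonneg hγ.le (by linarith))
  · filter_upwards [hev] with γ hγ
    have h1T := hTge1 γ hγ
    calc (∑ a, r a ^ (1 + γ)) ^ (γ / (1 + γ))
        ≤ (∑ a, r a ^ (1 + γ)) ^ (1 : ℝ) := by
          apply Real.rpow_le_rpow_of_exponent_le h1T
          rw [div_le_one (by linarith)]; linarith
    _ = ∑ a, r a ^ (1 + γ) := Real.rpow_one _

/-- L1: the cross term ratio tends to q₀ a₁. -/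
lemma lemL1 (q₀ q₁ : 𝒜 → ℝ) (hq₀ : ∀ a, 0 < q₀ a) (hq₁ : ∀ a, 0 < q₁ a)
    (a₁ : 𝒜) (hmax₁ : ∀ b, b ≠ a₁ → q₁ b < q₁ a₁) :
    Tendsto (fun γ : ℝ =>
      (∑ a, q₀ a * q₁ a ^ γ) / (∑ a, q₁ a ^ (1 + γ)) ^ (γ / (1 + γ)))
      atTop (𝓝 (q₀ a₁)) := by
  classical
  set M := q₁ a₁ with hM_def
  have hM := hq₁ a₁
  set r : 𝒜 → ℝ := fun a => q₁ a / M with hr_def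
  have hr : ∀ a, 0 < r a := fun a => div_pos (hq₁ a) hM
  have h1 : r a₁ = 1 := div_self hM.ne'
  have hlt : ∀ b, b ≠ a₁ → r b < 1 := fun b hb => (div_lt_one hM).2 (hmax₁ b hb)
  have hN : Tendsto (fun γ : ℝ => ∑ a, q₀ a * r a ^ γ) atTop (𝓝 (q₀ a₁)) :=
    sum_mul_rpow_tendsto q₀ r hr a₁ h1 hlt
  have hC := lemC q₁ hq₁ a₁ hmax₁
  have hdiv : Tendsto (fun γ : ℝ =>
      (∑ a, q₀ a * r a ^ γ) / (∑ a, (q₁ a / q₁ a₁) ^ (1 + γ)) ^ (γ / (1 + γ)))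
      atTop (𝓝 (q₀ a₁)) := by
    have := hN.div hC one_ne_zero
    simpa [Pi.div_def] using this
  refine hdiv.congr' ?_
  filter_upwards [eventually_gt_atTop (0:ℝ)] with γ hγ
  have h1γ : (0:ℝ) < 1 + γ := by linarith
  -- numerator identity
  have hnum : ∑ a, q₀ a * r a ^ γ = (∑ a, q₀ a * q₁ a ^ γ) / M ^ γ := by
    rw [Finset.sum_div]
    apply Finset.sum_congr rfl
    intro a _
    rw [hr_def, Real.div_rpow (hq₁ a).le hM.le, mul_div_assoc]
  -- denominator identity
  have hden : (∑ a, (q₁ a / q₁ a₁) ^ (1 + γ)) ^ (γ / (1 + γ))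
      = (∑ a, q₁ a ^ (1 + γ)) ^ (γ / (1 + γ)) / M ^ γ := by
    have hsum : ∑ a, (q₁ a / q₁ a₁) ^ (1 + γ)
        = (∑ a, q₁ a ^ (1 + γ)) / M ^ (1 + γ) := by
      rw [Finset.sum_div]
      apply Finset.sum_congr rfl
      intro a _
      rw [Real.div_rpow (hq₁ a).le hM.le]
    rw [hsum, Real.div_rpow (Finset.sum_nonneg fun a _ =>
      (Real.rpow_pos_of_pos (hq₁ a) _).le) (Real.rpow_pos_of_pos hM _).le]
    congr 1
    rw [← Real.rpow_mul hM.le]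
    congr 1
    field_simp
  rw [hnum, hden]
  have hMγ : (0:ℝ) < M ^ γ := Real.rpow_pos_of_pos hM _
  have hB : (0:ℝ) < (∑ a, q₁ a ^ (1 + γ)) ^ (γ / (1 + γ)) :=
    Real.rpow_pos_of_pos (Finset.sum_pos (fun a _ =>
      Real.rpow_pos_of_pos (hq₁ a) _) Finset.univ_nonempty) _
  field_simp

/-- L2: the power-mean term tends to max q₀. -/
lemma lemL2 (q₀ : 𝒜 → ℝ) (hq₀ : ∀ a, 0 < q₀ a)
    (a₀ : 𝒜) (hmax₀ : ∀ b, b ≠ a₀ → q₀ b < q₀ a₀) :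
    Tendsto (fun γ : ℝ => (∑ a, q₀ a ^ (1 + γ)) ^ (1 / (1 + γ)))
      atTop (𝓝 (q₀ a₀)) := by
  classical
  set M := q₀ a₀ with hM_def
  have hM := hq₀ a₀
  have hle : ∀ b, q₀ b ≤ M := by
    intro b
    by_cases hb : b = a₀
    · subst hb; exact le_rfl
    · exact (hmax₀ b hb).le
  set n : ℕ := Fintype.card 𝒜 with hn_def
  have hn : 0 < n := Fintype.card_pos
  -- upper bound function tends to M
  have hub : Tendsto (fun γ : ℝ => (n : ℝ) ^ (1 / (1 + γ)) * M) atTop (𝓝 M) := by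
    have h0 : Tendsto (fun γ : ℝ => 1 / (1 + γ)) atTop (𝓝 0) := by
      simpa [one_div, Pi.inv_def] using
        (tendsto_atTop_add_const_left atTop (1:ℝ) tendsto_id).inv_tendsto_atTop
    have hc : ContinuousAt (fun x : ℝ => (n : ℝ) ^ x) 0 :=
      Real.continuousAt_const_rpow (by positivity)
    have := (hc.tendsto.comp h0).mul_const M
    simpa [Real.rpow_zero] using this
  refine tendsto_of_tendsto_of_tendsto_of_le_of_le' tendsto_const_nhds hub ?_ ?_
  · filter_upwards [eventually_gt_atTop (0:ℝ)] with γ hγ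
    have h1γ : (0:ℝ) < 1 + γ := by linarith
    have hsingle : M ^ (1 + γ) ≤ ∑ a, q₀ a ^ (1 + γ) :=
      Finset.single_le_sum (f := fun a => q₀ a ^ (1 + γ))
        (fun a _ => (Real.rpow_pos_of_pos (hq₀ a) _).le) (Finset.mem_univ a₀)
    calc M = (M ^ (1 + γ)) ^ (1 / (1 + γ)) := by
          rw [← Real.rpow_mul hM.le, mul_one_div, div_self h1γ.ne', Real.rpow_one]
    _ ≤ (∑ a, q₀ a ^ (1 + γ)) ^ (1 / (1 + γ)) :=
      Real.rpow_le_rpow (Real.rpow_pos_of_pos hM _).le hsingle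
        (by positivity)
  · filter_upwards [eventually_gt_atTop (0:ℝ)] with γ hγ
    have h1γ : (0:ℝ) < 1 + γ := by linarith
    have hsum : ∑ a, q₀ a ^ (1 + γ) ≤ (n : ℝ) * M ^ (1 + γ) := by
      calc ∑ a, q₀ a ^ (1 + γ) ≤ ∑ _a : 𝒜, M ^ (1 + γ) :=
        Finset.sum_le_sum fun a _ =>
          Real.rpow_le_rpow (hq₀ a).le (hle a) h1γ.le
      _ = (n : ℝ) * M ^ (1 + γ) := by
        rw [Finset.sum_const, Finset.card_univ, nsmul_eq_mul]
    calc (∑ a, q₀ a ^ (1 + γ)) ^ (1 / (1 + γ))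
        ≤ ((n : ℝ) * M ^ (1 + γ)) ^ (1 / (1 + γ)) :=
      Real.rpow_le_rpow (Finset.sum_nonneg fun a _ =>
        (Real.rpow_pos_of_pos (hq₀ a) _).le) hsum (by positivity)
    _ = (n : ℝ) ^ (1 / (1 + γ)) * M := by
      rw [Real.mul_rpow (by positivity) (Real.rpow_pos_of_pos hM _).le,
        ← Real.rpow_mul hM.le, mul_one_div, div_self h1γ.ne', Real.rpow_one]

end Main

/-- with unique maximizers a₁* of q₁ and a₀* of q₀,
    γ · (cross-entropy term) → −q₀(a₁*) and γ · d_γ(q₀,q₁) → q₀(a₀*) − q₀(a₁*)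
    as γ → ∞ (the pointwise regret). -/
theorem gamma_dGamma_tendsto_regret
    {𝒜 : Type*} [Fintype 𝒜] [Nonempty 𝒜]
    (q₀ q₁ : 𝒜 → ℝ) (hq₀ : ∀ a, 0 < q₀ a) (hq₁ : ∀ a, 0 < q₁ a)
    (a₁ a₀ : 𝒜)
    (hmax₁ : ∀ b, b ≠ a₁ → q₁ b < q₁ a₁)
    (hmax₀ : ∀ b, b ≠ a₀ → q₀ b < q₀ a₀) :
    Tendsto (fun γ : ℝ => γ * (-(1 / γ) *
        ((∑ a, q₀ a * q₁ a ^ γ) / (∑ a, q₁ a ^ (1 + γ)) ^ (γ / (1 + γ)))))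
      atTop (𝓝 (-(q₀ a₁)))
    ∧ Tendsto (fun γ : ℝ => γ * dGamma γ q₀ q₁) atTop (𝓝 (q₀ a₀ - q₀ a₁)) := by
  have hL1 := lemL1 q₀ q₁ hq₀ hq₁ a₁ hmax₁
  have hL2 := lemL2 q₀ hq₀ a₀ hmax₀
  constructor
  · refine hL1.neg.congr' ?_
    filter_upwards [eventually_gt_atTop (0:ℝ)] with γ hγ
    have key : ∀ x : ℝ, γ * (1 / γ * x) = x := fun x => by
      rw [← mul_assoc, mul_one_div, div_self hγ.ne', one_mul]
    rw [neg_mul, mul_neg, key]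
  · have h := hL1.neg.add hL2
    have hlim : -(q₀ a₁) + q₀ a₀ = q₀ a₀ - q₀ a₁ := by ring
    rw [hlim] at h
    refine h.congr' ?_
    filter_upwards [eventually_gt_atTop (0:ℝ)] with γ hγ
    have key : ∀ x : ℝ, γ * (1 / γ * x) = x := fun x => by
      rw [← mul_assoc, mul_one_div, div_self hγ.ne', one_mul]
    unfold dGamma
    rw [mul_add, neg_mul, mul_neg, key, key]
end

section
/- Under the multiplicative semiparametric model Q(x,a) = exp{f(x) + g(x,a,ψ)}, the expected γ-power loss satisfies E[L_γ(ψ)] − E[L_γ(ψ₀)] = D_γ(Q(·,·,ψ₀), Q(·,·,ψ)) ≥ 0 for every ψ, with equality at ψ = ψ₀; hence ψ₀ minimizes the population γ-power loss regardless of the nuisance function f. In the pointwise/finite form: for any f-value c ∈ ℝ, the function ψ ↦ -(1/γ) ∑_a e^{c + g₀(a)} e^{γ g_ψ(a)} / (∑_{a'} e^{(γ+1) g_ψ(a')})^{γ/(1+γ)} is minimized over all functions g_ψ at g_ψ = g₀, and the minimizer set is exactly { g : g(a) = g₀(a) + const }. -/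
open Finset

/-- The pointwise population γ-power loss under the multiplicative
    semiparametric model Q(a) = exp{c + g₀(a)}, evaluated at candidate g. -/
noncomputable def gammaLoss {𝒜 : Type*} [Fintype 𝒜] (γ c : ℝ)
    (g₀ g : 𝒜 → ℝ) : ℝ :=
  -(1 / γ) * ∑ a, Real.exp (c + g₀ a) * Real.exp (γ * g a) /
      (∑ a', Real.exp ((γ + 1) * g a')) ^ (γ / (1 + γ))

section Aux

open Real

lemma core_convex {𝒜 : Type*} [Fintype 𝒜] [Nonempty 𝒜] {p : ℝ} (hp : 1 < p)
    (u v : 𝒜 → ℝ) (hu : ∀ a, 0 < u a) (hv : ∀ a, 0 < v a) :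
    (∑ a, u a) ^ (1 - p) * (∑ a, v a) ^ p ≤ ∑ a, u a ^ (1 - p) * v a ^ p
    ∧ ((∑ a, u a ^ (1 - p) * v a ^ p) = (∑ a, u a) ^ (1 - p) * (∑ a, v a) ^ p
        ↔ ∃ m : ℝ, ∀ a, v a = m * u a) := by
  classical
  set U := ∑ a, u a with hUdef
  set V := ∑ a, v a with hVdef
  have hU : 0 < U := Finset.sum_pos (fun a _ => hu a) Finset.univ_nonempty
  have hV : 0 < V := Finset.sum_pos (fun a _ => hv a) Finset.univ_nonempty
  set w : 𝒜 → ℝ := fun a => u a / U with hwdef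
  set r : 𝒜 → ℝ := fun a => v a / u a with hrdef
  have hw : ∀ a, 0 < w a := fun a => div_pos (hu a) hU
  have hw1 : ∑ a, w a = 1 := by rw [hwdef, ← Finset.sum_div, ← hUdef]; exact div_self hU.ne'
  have hr : ∀ a, 0 < r a := fun a => div_pos (hv a) (hu a)
  have hwr : ∑ a, w a • r a = V / U := by
    have h : ∀ a, w a • r a = v a / U := by
      intro a
      simp only [smul_eq_mul, hwdef, hrdef]
      field_simp [(hu a).ne', hU.ne']
    rw [Finset.sum_congr rfl fun a _ => h a, ← Finset.sum_div, ← hVdef]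
  have hterm : ∀ a, w a • (r a ^ p) = u a ^ (1 - p) * v a ^ p / U := by
    intro a
    simp only [smul_eq_mul, hwdef, hrdef]
    rw [Real.div_rpow (hv a).le (hu a).le, Real.rpow_sub (hu a), Real.rpow_one]
    field_simp
  have hsum : ∑ a, w a • (r a ^ p) = (∑ a, u a ^ (1 - p) * v a ^ p) / U := by
    rw [Finset.sum_congr rfl fun a _ => hterm a, Finset.sum_div]
  have hRHS : U ^ (1 - p) * V ^ p = (V / U) ^ p * U := by
    rw [Real.div_rpow hV.le hU.le, Real.rpow_sub hU, Real.rpow_one]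
    field_simp
  have hconv := strictConvexOn_rpow hp
  have hjen : (∑ a, w a • r a) ^ p ≤ ∑ a, w a • (r a ^ p) := by
    have := hconv.convexOn.map_sum_le (t := Finset.univ) (fun a _ => (hw a).le) hw1
      (fun a _ => Set.mem_Ici.mpr (hr a).le)
    simpa using this
  have heqiff := hconv.map_sum_eq_iff (t := Finset.univ) (w := w) (p := r)
      (fun a _ => hw a) hw1 (fun a _ => Set.mem_Ici.mpr (hr a).le)
  constructor
  · rw [hRHS]
    have h1 : (V / U) ^ p ≤ (∑ a, u a ^ (1 - p) * v a ^ p) / U := by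
      rw [← hsum, ← hwr]; exact hjen
    calc (V / U) ^ p * U ≤ ((∑ a, u a ^ (1 - p) * v a ^ p) / U) * U :=
          mul_le_mul_of_nonneg_right h1 hU.le
      _ = ∑ a, u a ^ (1 - p) * v a ^ p := by field_simp
  · have h2 : ((∑ a, u a ^ (1 - p) * v a ^ p) = U ^ (1 - p) * V ^ p) ↔ ∀ a, r a = V / U := by
      rw [hRHS, ← div_eq_iff hU.ne', ← hsum, eq_comm, ← hwr]
      rw [heqiff]
      simp [hwr]
    rw [h2]
    constructor
    · intro h
      refine ⟨V / U, fun a => ?_⟩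
      have := h a
      rw [hrdef] at this
      exact (div_eq_iff (hu a).ne').mp this
    · rintro ⟨m, hm⟩ a
      have hVm : V = m * U := by
        rw [hVdef, hUdef, Finset.mul_sum]
        exact Finset.sum_congr rfl fun a _ => hm a
      rw [hrdef]
      simp only
      rw [hm a, hVm, mul_div_assoc, mul_div_assoc, div_self (hu a).ne', div_self hU.ne']

lemma core_concave {𝒜 : Type*} [Fintype 𝒜] [Nonempty 𝒜] {p : ℝ} (hp0 : 0 < p) (hp1 : p < 1)
    (u v : 𝒜 → ℝ) (hu : ∀ a, 0 < u a) (hv : ∀ a, 0 < v a) :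
    ∑ a, u a ^ (1 - p) * v a ^ p ≤ (∑ a, u a) ^ (1 - p) * (∑ a, v a) ^ p
    ∧ ((∑ a, u a ^ (1 - p) * v a ^ p) = (∑ a, u a) ^ (1 - p) * (∑ a, v a) ^ p
        ↔ ∃ m : ℝ, ∀ a, v a = m * u a) := by
  classical
  set U := ∑ a, u a with hUdef
  set V := ∑ a, v a with hVdef
  have hU : 0 < U := Finset.sum_pos (fun a _ => hu a) Finset.univ_nonempty
  have hV : 0 < V := Finset.sum_pos (fun a _ => hv a) Finset.univ_nonempty
  set w : 𝒜 → ℝ := fun a => u a / U with hwdef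
  set r : 𝒜 → ℝ := fun a => v a / u a with hrdef
  have hw : ∀ a, 0 < w a := fun a => div_pos (hu a) hU
  have hw1 : ∑ a, w a = 1 := by rw [hwdef, ← Finset.sum_div, ← hUdef]; exact div_self hU.ne'
  have hr : ∀ a, 0 < r a := fun a => div_pos (hv a) (hu a)
  have hwr : ∑ a, w a • r a = V / U := by
    have h : ∀ a, w a • r a = v a / U := by
      intro a
      simp only [smul_eq_mul, hwdef, hrdef]
      field_simp [(hu a).ne', hU.ne']
    rw [Finset.sum_congr rfl fun a _ => h a, ← Finset.sum_div, ← hVdef]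
  have hterm : ∀ a, w a • (r a ^ p) = u a ^ (1 - p) * v a ^ p / U := by
    intro a
    simp only [smul_eq_mul, hwdef, hrdef]
    rw [Real.div_rpow (hv a).le (hu a).le, Real.rpow_sub (hu a), Real.rpow_one]
    field_simp
  have hsum : ∑ a, w a • (r a ^ p) = (∑ a, u a ^ (1 - p) * v a ^ p) / U := by
    rw [Finset.sum_congr rfl fun a _ => hterm a, Finset.sum_div]
  have hRHS : U ^ (1 - p) * V ^ p = (V / U) ^ p * U := by
    rw [Real.div_rpow hV.le hU.le, Real.rpow_sub hU, Real.rpow_one]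
    field_simp
  have hconc := Real.strictConcaveOn_rpow hp0 hp1
  have hjen : ∑ a, w a • (r a ^ p) ≤ (∑ a, w a • r a) ^ p := by
    have := hconc.concaveOn.le_map_sum (t := Finset.univ) (fun a _ => (hw a).le) hw1
      (fun a _ => Set.mem_Ici.mpr (hr a).le)
    simpa using this
  have heqiff := hconc.map_sum_eq_iff (t := Finset.univ) (w := w) (p := r)
      (fun a _ => hw a) hw1 (fun a _ => Set.mem_Ici.mpr (hr a).le)
  constructor
  · rw [hRHS]
    have h1 : (∑ a, u a ^ (1 - p) * v a ^ p) / U ≤ (V / U) ^ p := by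
      rw [← hsum, ← hwr]; exact hjen
    calc ∑ a, u a ^ (1 - p) * v a ^ p
        = ((∑ a, u a ^ (1 - p) * v a ^ p) / U) * U := by field_simp
      _ ≤ (V / U) ^ p * U := mul_le_mul_of_nonneg_right h1 hU.le
  · have h2 : ((∑ a, u a ^ (1 - p) * v a ^ p) = U ^ (1 - p) * V ^ p) ↔ ∀ a, r a = V / U := by
      rw [hRHS, ← div_eq_iff hU.ne', ← hsum, eq_comm, ← hwr]
      rw [heqiff]
      simp [hwr]
    rw [h2]
    constructor
    · intro h
      refine ⟨V / U, fun a => ?_⟩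
      have := h a
      rw [hrdef] at this
      exact (div_eq_iff (hu a).ne').mp this
    · rintro ⟨m, hm⟩ a
      have hVm : V = m * U := by
        rw [hVdef, hUdef, Finset.mul_sum]
        exact Finset.sum_congr rfl fun a _ => hm a
      rw [hrdef]
      simp only
      rw [hm a, hVm, mul_div_assoc, mul_div_assoc, div_self (hu a).ne', div_self hU.ne']

lemma exp_prop {𝒜 : Type*} [Fintype 𝒜] [Nonempty 𝒜] (β : ℝ) (hβ : β ≠ 0) (φ ψ : 𝒜 → ℝ) :
    (∃ m : ℝ, ∀ a, Real.exp (β * φ a) = m * Real.exp (β * ψ a)) ↔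
      ∃ k : ℝ, ∀ a, φ a = ψ a + k := by
  constructor
  · rintro ⟨m, hm⟩
    have a0 : 𝒜 := Classical.arbitrary 𝒜
    have hm0 : 0 < m := by
      have h := hm a0
      have h1 := Real.exp_pos (β * φ a0)
      have h2 := Real.exp_pos (β * ψ a0)
      nlinarith
    refine ⟨Real.log m / β, fun a => ?_⟩
    have h := congrArg Real.log (hm a)
    rw [Real.log_exp, Real.log_mul hm0.ne' (Real.exp_ne_zero _), Real.log_exp] at h
    field_simp
    ring_nf at h ⊢
    nlinarith [h]
  · rintro ⟨k, hk⟩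
    exact ⟨Real.exp (β * k), fun a => by rw [hk a, ← Real.exp_add]; congr 1; ring⟩

lemma hloss_lem {𝒜 : Type*} [Fintype 𝒜] [Nonempty 𝒜] (γ c : ℝ) (h1' : γ + 1 ≠ 0)
    (g₀ g : 𝒜 → ℝ) :
    gammaLoss γ c g₀ g = -(1 / γ) *
      ((∑ a, Real.exp ((γ + 1) * (c + g₀ a)) ^ (1 - γ / (γ + 1)) *
          Real.exp ((γ + 1) * g a) ^ (γ / (γ + 1))) /
        (∑ a, Real.exp ((γ + 1) * g a)) ^ (γ / (γ + 1))) := by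
  unfold gammaLoss
  rw [show γ / (1 + γ) = γ / (γ + 1) by rw [add_comm]]
  rw [Finset.sum_div]
  congr 1
  refine Finset.sum_congr rfl fun a _ => ?_
  congr 1
  rw [← Real.exp_mul, ← Real.exp_mul, ← Real.exp_add, ← Real.exp_add]
  congr 1
  field_simp
  ring

lemma hloss0_lem {𝒜 : Type*} [Fintype 𝒜] [Nonempty 𝒜] (γ c : ℝ) (h1' : γ + 1 ≠ 0)
    (g₀ : 𝒜 → ℝ) :
    gammaLoss γ c g₀ g₀ = -(1 / γ) *
      (∑ a, Real.exp ((γ + 1) * (c + g₀ a))) ^ (1 - γ / (γ + 1)) := by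
  rw [hloss_lem γ c h1' g₀ g₀]
  congr 1
  set S := ∑ a, Real.exp ((γ + 1) * g₀ a) with hS
  have hSpos : 0 < S := Finset.sum_pos (fun a _ => Real.exp_pos _) Finset.univ_nonempty
  have hterm : ∀ a : 𝒜, Real.exp ((γ + 1) * (c + g₀ a)) ^ (1 - γ / (γ + 1)) *
      Real.exp ((γ + 1) * g₀ a) ^ (γ / (γ + 1))
      = Real.exp c * Real.exp ((γ + 1) * g₀ a) := by
    intro a
    rw [← Real.exp_mul, ← Real.exp_mul, ← Real.exp_add, ← Real.exp_add]
    congr 1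
    field_simp
    ring
  have hU : (∑ a, Real.exp ((γ + 1) * (c + g₀ a))) = Real.exp ((γ + 1) * c) * S := by
    rw [hS, Finset.mul_sum]
    refine Finset.sum_congr rfl fun a _ => ?_
    rw [← Real.exp_add]
    congr 1
    ring
  rw [Finset.sum_congr rfl fun a _ => hterm a, ← Finset.mul_sum, ← hS, hU,
    Real.mul_rpow (Real.exp_pos _).le hSpos.le, ← Real.exp_mul,
    show (γ + 1) * c * (1 - γ / (γ + 1)) = c by field_simp; ring,
    Real.rpow_sub hSpos, Real.rpow_one, mul_div_assoc]

end Aux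

/-- the population γ-power loss is minimized at g = g₀
    regardless of the nuisance constant c, and the minimizer set is exactly
    { g : g = g₀ + const } (semiparametric consistency of the γ-MDE). -/
theorem gammaLoss_minimized_at_truth
    {𝒜 : Type*} [Fintype 𝒜] [Nonempty 𝒜]
    (γ c : ℝ) (h0 : γ ≠ 0) (h1 : γ ≠ -1) (g₀ : 𝒜 → ℝ) :
    (∀ g : 𝒜 → ℝ, gammaLoss γ c g₀ g₀ ≤ gammaLoss γ c g₀ g)
    ∧ ∀ g : 𝒜 → ℝ,
        gammaLoss γ c g₀ g = gammaLoss γ c g₀ g₀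
          ↔ ∃ k : ℝ, ∀ a, g a = g₀ a + k := by
  have h1' : γ + 1 ≠ 0 := fun h => h1 (by linarith)
  have key : ∀ g : 𝒜 → ℝ, gammaLoss γ c g₀ g₀ ≤ gammaLoss γ c g₀ g ∧
      (gammaLoss γ c g₀ g = gammaLoss γ c g₀ g₀ ↔ ∃ k : ℝ, ∀ a, g a = g₀ a + k) := by
    intro g
    have hSpos : 0 < ∑ a, Real.exp ((γ + 1) * g a) :=
      Finset.sum_pos (fun a _ => Real.exp_pos _) Finset.univ_nonempty
    have hSτ : 0 < (∑ a, Real.exp ((γ + 1) * g a)) ^ (γ / (γ + 1)) :=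
      Real.rpow_pos_of_pos hSpos _
    have hne : -(1 / γ) ≠ 0 := neg_ne_zero.mpr (one_div_ne_zero h0)
    rw [hloss_lem γ c h1' g₀ g, hloss0_lem γ c h1' g₀]
    rcases lt_trichotomy γ 0 with hγ | hγ | hγ
    · rcases lt_trichotomy (γ + 1) 0 with hγ1 | hγ1 | hγ1
      · -- γ < -1 : exponent γ/(γ+1) > 1, convex case
        have hp : 1 < γ / (γ + 1) := by
          rw [lt_div_iff_of_neg hγ1]; linarith
        obtain ⟨hge, hiff⟩ := core_convex hp (fun a => Real.exp ((γ + 1) * (c + g₀ a)))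
          (fun a => Real.exp ((γ + 1) * g a)) (fun a => Real.exp_pos _)
          (fun a => Real.exp_pos _)
        constructor
        · have hd : (∑ a, Real.exp ((γ + 1) * (c + g₀ a))) ^ (1 - γ / (γ + 1)) ≤
              (∑ a, Real.exp ((γ + 1) * (c + g₀ a)) ^ (1 - γ / (γ + 1)) *
                Real.exp ((γ + 1) * g a) ^ (γ / (γ + 1))) /
              (∑ a, Real.exp ((γ + 1) * g a)) ^ (γ / (γ + 1)) := by
            rw [le_div_iff₀ hSτ]
            exact hge
          have hpos : (0 : ℝ) ≤ -(1 / γ) :=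
            neg_nonneg.mpr (le_of_lt (div_neg_of_pos_of_neg one_pos hγ))
          exact mul_le_mul_of_nonneg_left hd hpos
        · rw [mul_right_inj' hne, div_eq_iff hSτ.ne', hiff]
          exact (exp_prop (γ + 1) h1' g (fun a => c + g₀ a)).trans
            ⟨fun ⟨k, hk⟩ => ⟨c + k, fun a => by rw [hk a]; ring⟩,
             fun ⟨k, hk⟩ => ⟨k - c, fun a => by rw [hk a]; ring⟩⟩
      · exact absurd hγ1 h1'
      · -- -1 < γ < 0 : use convex case with exponent 1 - γ/(γ+1) > 1, roles swapped
        have hp : 1 < 1 - γ / (γ + 1) := by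
          have : γ / (γ + 1) < 0 := div_neg_of_neg_of_pos hγ hγ1
          linarith
        obtain ⟨hge, hiff⟩ := core_convex hp (fun a => Real.exp ((γ + 1) * g a))
          (fun a => Real.exp ((γ + 1) * (c + g₀ a))) (fun a => Real.exp_pos _)
          (fun a => Real.exp_pos _)
        have e : (1 : ℝ) - (1 - γ / (γ + 1)) = γ / (γ + 1) := by ring
        rw [e] at hge hiff
        have hsum_comm : (∑ a, Real.exp ((γ + 1) * (c + g₀ a)) ^ (1 - γ / (γ + 1)) *
              Real.exp ((γ + 1) * g a) ^ (γ / (γ + 1)))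
            = ∑ a, Real.exp ((γ + 1) * g a) ^ (γ / (γ + 1)) *
              Real.exp ((γ + 1) * (c + g₀ a)) ^ (1 - γ / (γ + 1)) :=
          Finset.sum_congr rfl fun a _ => mul_comm _ _
        constructor
        · have hd : (∑ a, Real.exp ((γ + 1) * (c + g₀ a))) ^ (1 - γ / (γ + 1)) ≤
              (∑ a, Real.exp ((γ + 1) * (c + g₀ a)) ^ (1 - γ / (γ + 1)) *
                Real.exp ((γ + 1) * g a) ^ (γ / (γ + 1))) /
              (∑ a, Real.exp ((γ + 1) * g a)) ^ (γ / (γ + 1)) := by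
            rw [le_div_iff₀ hSτ, hsum_comm, mul_comm]
            exact hge
          have hpos : (0 : ℝ) ≤ -(1 / γ) :=
            neg_nonneg.mpr (le_of_lt (div_neg_of_pos_of_neg one_pos hγ))
          exact mul_le_mul_of_nonneg_left hd hpos
        · rw [mul_right_inj' hne, div_eq_iff hSτ.ne', hsum_comm,
            mul_comm ((∑ a, Real.exp ((γ + 1) * (c + g₀ a))) ^ (1 - γ / (γ + 1))), hiff]
          exact (exp_prop (γ + 1) h1' (fun a => c + g₀ a) g).trans
            ⟨fun ⟨k, hk⟩ => ⟨c - k, fun a => by have := hk a; linarith⟩,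
             fun ⟨k, hk⟩ => ⟨c - k, fun a => by have := hk a; linarith⟩⟩
    · exact absurd hγ h0
    · -- 0 < γ : exponent in (0,1), concave case
      have hτ0 : 0 < γ / (γ + 1) := div_pos hγ (by linarith)
      have hτ1 : γ / (γ + 1) < 1 := (div_lt_one (by linarith)).mpr (by linarith)
      obtain ⟨hle, hiff⟩ := core_concave hτ0 hτ1 (fun a => Real.exp ((γ + 1) * (c + g₀ a)))
        (fun a => Real.exp ((γ + 1) * g a)) (fun a => Real.exp_pos _)
        (fun a => Real.exp_pos _)
      constructor
      · have hd : (∑ a, Real.exp ((γ + 1) * (c + g₀ a)) ^ (1 - γ / (γ + 1)) *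
              Real.exp ((γ + 1) * g a) ^ (γ / (γ + 1))) /
            (∑ a, Real.exp ((γ + 1) * g a)) ^ (γ / (γ + 1)) ≤
            (∑ a, Real.exp ((γ + 1) * (c + g₀ a))) ^ (1 - γ / (γ + 1)) := by
          rw [div_le_iff₀ hSτ]
          exact hle
        have hneg : -(1 / γ) ≤ 0 := neg_nonpos.mpr (by positivity)
        exact mul_le_mul_of_nonpos_left hd hneg
      · rw [mul_right_inj' hne, div_eq_iff hSτ.ne', hiff]
        exact (exp_prop (γ + 1) h1' g (fun a => c + g₀ a)).trans
          ⟨fun ⟨k, hk⟩ => ⟨c + k, fun a => by rw [hk a]; ring⟩,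
           fun ⟨k, hk⟩ => ⟨k - c, fun a => by rw [hk a]; ring⟩⟩
  exact ⟨fun g => (key g).1, fun g => (key g).2⟩
end

section
/- The inverse-probability-weighting identity: for any function F(x,a), E[ Y/p(A|X) · F(X,A) | X = x ] = ∑_{a∈𝒜} Q(x,a) F(x,a), where Q(x,a) = E[Y | X=x, A=a]. In particular, when Q(x,a) = exp{f(x) + g(x,a,ψ)}, this equals e^{f(x)} ∑_a e^{g(x,a,ψ)} F(x,a), and consequently the γ-power estimating function ℰ_γ is conditionally unbiased: E[ℰ_γ(ψ, X, A, Y) | X = x] = 0. -/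
open Finset

/-- the inverse-probability-weighting identity conditionally on
    X = x: E[Y/p(A) F(A) | X = x] = ∑_a Q(a) F(a); under the multiplicative
    model Q(a) = e^{f(x)} e^{g(a)} this equals e^{f(x)} ∑_a e^{g(a)} F(a), and
    consequently the γ-power estimating function is conditionally unbiased. -/
theorem ipw_identity_and_unbiased_estimating_function
    {𝒜 : Type*} [Fintype 𝒜] [Nonempty 𝒜]
    (p : 𝒜 → ℝ) (hp : ∀ a, 0 < p a) (hpsum : ∑ a, p a = 1)
    (Q : 𝒜 → ℝ) (fx γ : ℝ) (g G : 𝒜 → ℝ)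
    (hQ : ∀ a, Q a = Real.exp (fx + g a)) :
    (∀ F : 𝒜 → ℝ, ∑ a, p a * (Q a / p a * F a) = ∑ a, Q a * F a)
    ∧ (∀ F : 𝒜 → ℝ, ∑ a, p a * (Q a / p a * F a)
        = Real.exp fx * ∑ a, Real.exp (g a) * F a)
    ∧ ∑ a, p a * (Q a / p a *
        (Real.exp (γ * g a) /
            (∑ a', Real.exp ((γ + 1) * g a')) ^ (γ / (γ + 1) + 1) *
          ∑ a', Real.exp ((γ + 1) * g a') * (G a - G a'))) = 0 := by
  have hipw : ∀ F : 𝒜 → ℝ, ∑ a, p a * (Q a / p a * F a) = ∑ a, Q a * F a := by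
    intro F
    refine Finset.sum_congr rfl fun a _ => ?_
    field_simp [(hp a).ne']
  have hmul : ∀ F : 𝒜 → ℝ, ∑ a, p a * (Q a / p a * F a)
      = Real.exp fx * ∑ a, Real.exp (g a) * F a := by
    intro F
    rw [hipw F, Finset.mul_sum]
    refine Finset.sum_congr rfl fun a _ => ?_
    rw [hQ a, Real.exp_add]; ring
  refine ⟨hipw, hmul, ?_⟩
  set F : 𝒜 → ℝ := fun a =>
    Real.exp (γ * g a) /
        (∑ a', Real.exp ((γ + 1) * g a')) ^ (γ / (γ + 1) + 1) *
      ∑ a', Real.exp ((γ + 1) * g a') * (G a - G a') with hF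
  rw [hmul F]
  have key : ∑ a, Real.exp (g a) * F a = 0 := by
    set R : ℝ := (∑ a', Real.exp ((γ + 1) * g a')) ^ (γ / (γ + 1) + 1) with hR
    have h1 : ∀ a : 𝒜, Real.exp (g a) * F a
        = R⁻¹ * ∑ a', Real.exp ((γ + 1) * g a) * Real.exp ((γ + 1) * g a')
            * (G a - G a') := by
      intro a
      rw [hF]
      simp only [Finset.mul_sum]
      refine Finset.sum_congr rfl fun a' _ => ?_
      have : Real.exp (g a) * Real.exp (γ * g a) = Real.exp ((γ + 1) * g a) := by
        rw [← Real.exp_add]; ring_nf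
      field_simp
      rw [this, mul_comm (γ + 1)]; ring
    simp only [h1, ← Finset.mul_sum]
    have : ∑ a, ∑ a', Real.exp ((γ + 1) * g a) * Real.exp ((γ + 1) * g a')
        * (G a - G a') = 0 := by
      have hswap : ∑ a : 𝒜, ∑ a' : 𝒜, Real.exp ((γ + 1) * g a) * Real.exp ((γ + 1) * g a') * G a
          = ∑ a : 𝒜, ∑ a' : 𝒜, Real.exp ((γ + 1) * g a) * Real.exp ((γ + 1) * g a') * G a' := by
        rw [Finset.sum_comm]
        refine Finset.sum_congr rfl fun a _ => Finset.sum_congr rfl fun a' _ => ?_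
        ring
      simp only [mul_sub, Finset.sum_sub_distrib, hswap, sub_self]
    rw [this, mul_zero]
  rw [key, mul_zero]
end
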